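/- arXiv:2307.04017 — 3 statements merged into one kernel-verified Lean document; each statement's English description precedes it below -/
import Mathlib

section
/- Let Ω be a compact subset of ℝ^d, let 𝒳 = {X(1),…,X(k)} be a collection of finite-dimensional linear subspaces of C(Ω), and suppose there exists a set ξ = {ξ¹,…,ξ^m} ⊂ Ω of m points providing L∞-universal discretization for 𝒳 with constant D ≥ 1, i.e. ‖f‖_∞ ≤ D·max_{1≤j≤m} |f(ξ^j)| for every f ∈ ⋃_{n=1}^k X(n). Then for any compact subset 𝐅 of C(Ω) there exists a set of m points η = {η¹,…,η^m} ⊂ Ω such that sup_{f∈𝐅} min_{1≤n≤k} ‖f − u_n(f)‖_∞ ≤ (2D + 1)·min_{1≤n≤k} d(𝐅, X(n))_∞, where for each f and n, u_n(f) is any element of X(n) minimizing max_{1≤j≤m} |f(η^j) − u(η^j)| over u ∈ X(n), and d(𝐅,Y)_∞ := sup_{f∈𝐅} inf_{y∈Y} ‖f − y‖_∞. -/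
noncomputable section
open scoped BigOperators

/-- Uniform norm of a continuous complex-valued function. -/
def unifNormC {α : Type*} [TopologicalSpace α] (f : C(α, ℂ)) : ℝ :=
  ⨆ x : α, ‖f x‖

/-- Best uniform approximation `d(f, X)_∞` of `f` by elements of the subspace `X`. -/
def distToSub {α : Type*} [TopologicalSpace α] (f : C(α, ℂ)) (X : Submodule ℂ C(α, ℂ)) : ℝ :=
  ⨅ u : X, unifNormC (f - (u : C(α, ℂ)))

/-!
Let `ξ` be the universal discretization points and `u ∈ X` a best approximation of `f` on `ξ`
in the discrete sup-norm `‖·‖_ξ`. For any `v ∈ X`, discretization applied to `v - u ∈ X` gives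
`‖v - u‖ ≤ D ‖v - u‖_ξ ≤ D (‖f - v‖_ξ + ‖f - u‖_ξ) ≤ 2D ‖f - v‖_ξ ≤ 2D ‖f - v‖`,
hence `‖f - u‖ ≤ (2D + 1) ‖f - v‖`, so `‖f - u‖ ≤ (2D + 1) d(f, X)_∞`, with `η = ξ`.
Taking the best subspace for each `f` and then the supremum over `𝐅` finishes the proof,
since `sup_f min_n ≤ min_n sup_f`.
-/

open Metric Set

section Discretization

variable {α E ι : Type*} [TopologicalSpace α] [SeminormedAddCommGroup E]

lemma ContinuousMap.iSup_norm_apply_sub_le [Finite ι] (g h : C(α, E)) (ξ : ι → α) :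
    ⨆ j, ‖(g - h) (ξ j)‖ ≤ (⨆ j, ‖g (ξ j)‖) + ⨆ j, ‖h (ξ j)‖ := by
  have hbdd (g : C(α, E)) : BddAbove (range fun j => ‖g (ξ j)‖) := (finite_range _).bddAbove
  refine Real.iSup_le (fun j => ?_) ?_
  · exact (norm_sub_le _ _).trans (add_le_add (le_ciSup (hbdd g) j) (le_ciSup (hbdd h) j))
  · exact add_nonneg (Real.iSup_nonneg fun _ => norm_nonneg _)
      (Real.iSup_nonneg fun _ => norm_nonneg _)

variable [CompactSpace α]

lemma ContinuousMap.iSup_norm_apply_le_norm (g : C(α, E)) (ξ : ι → α) :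
    ⨆ j, ‖g (ξ j)‖ ≤ ‖g‖ :=
  Real.iSup_le (fun j => g.norm_coe_le_norm (ξ j)) (norm_nonneg g)

variable [Finite ι] {X : AddSubgroup C(α, E)} {ξ : ι → α} {D : ℝ} {f u : C(α, E)}

theorem norm_sub_le_of_discreteBestApprox (hD : 0 ≤ D)
    (hξ : ∀ g ∈ X, ‖g‖ ≤ D * ⨆ j, ‖g (ξ j)‖) (hu : u ∈ X)
    (hmin : ∀ v ∈ X, ⨆ j, ‖(f - u) (ξ j)‖ ≤ ⨆ j, ‖(f - v) (ξ j)‖) {v : C(α, E)} (hv : v ∈ X) :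
    ‖f - u‖ ≤ (2 * D + 1) * ‖f - v‖ := by
  have hfv := (f - v).iSup_norm_apply_le_norm ξ
  have hvu : ‖v - u‖ ≤ 2 * D * ‖f - v‖ :=
    calc ‖v - u‖ ≤ D * ⨆ j, ‖((f - u) - (f - v)) (ξ j)‖ := by
          simpa only [sub_sub_sub_cancel_left] using hξ _ (sub_mem hv hu)
      _ ≤ D * ((⨆ j, ‖(f - u) (ξ j)‖) + ⨆ j, ‖(f - v) (ξ j)‖) := by
          gcongr; exact ContinuousMap.iSup_norm_apply_sub_le _ _ ξ
      _ ≤ D * (‖f - v‖ + ‖f - v‖) := by gcongr; exact (hmin v hv).trans hfv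
      _ = 2 * D * ‖f - v‖ := by ring
  calc ‖f - u‖ = ‖(f - v) + (v - u)‖ := by rw [sub_add_sub_cancel]
    _ ≤ ‖f - v‖ + ‖v - u‖ := norm_add_le _ _
    _ ≤ (2 * D + 1) * ‖f - v‖ := by linarith

theorem norm_sub_le_mul_infDist_of_discreteBestApprox (hD : 0 ≤ D)
    (hξ : ∀ g ∈ X, ‖g‖ ≤ D * ⨆ j, ‖g (ξ j)‖) (hu : u ∈ X)
    (hmin : ∀ v ∈ X, ⨆ j, ‖(f - u) (ξ j)‖ ≤ ⨆ j, ‖(f - v) (ξ j)‖) :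
    ‖f - u‖ ≤ (2 * D + 1) * infDist f (X : Set C(α, E)) := by
  have hc : 0 < 2 * D + 1 := by linarith
  rw [← div_le_iff₀' hc, le_infDist ⟨0, X.zero_mem⟩]
  intro v hv
  rw [div_le_iff₀' hc, dist_eq_norm]
  exact norm_sub_le_of_discreteBestApprox hD hξ hu hmin hv

end Discretization

lemma unifNormC_eq_norm {α : Type*} [TopologicalSpace α] [CompactSpace α] (f : C(α, ℂ)) :
    unifNormC f = ‖f‖ :=
  (ContinuousMap.norm_eq_iSup_norm f).symm

lemma distToSub_eq_infDist {α : Type*} [TopologicalSpace α] [CompactSpace α] (f : C(α, ℂ))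
    (X : Submodule ℂ C(α, ℂ)) : distToSub f X = infDist f (X : Set C(α, ℂ)) := by
  simp only [distToSub, infDist_eq_iInf, unifNormC_eq_norm, dist_eq_norm]
  rfl

/-- `sup inf ≤ inf sup` for real families, stated so that the junk value `0` of empty or
unbounded suprema and infima does no harm. -/
lemma Real.iSup_iInf_le_iInf_iSup_of_le {ι κ : Type*} {a b : ι → κ → ℝ}
    (ha : ∀ i j, 0 ≤ a i j) (hab : ∀ i j, a i j ≤ b i j)
    (hb : ∀ j, BddAbove (range fun i => b i j)) :
    ⨆ i, ⨅ j, a i j ≤ ⨅ j, ⨆ i, b i j := by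
  rcases isEmpty_or_nonempty κ with hκ | hκ
  · simp
  refine le_ciInf fun j => Real.iSup_le (fun i => ?_) ?_
  · exact (ciInf_le ⟨0, by rintro _ ⟨j', rfl⟩; exact ha i j'⟩ j).trans
      ((hab i j).trans (le_ciSup (hb j) i))
  · exact Real.iSup_nonneg fun i => (ha i j).trans (hab i j)

theorem stmt1_general {d k m : ℕ}
    (Ω : Set (Fin d → ℝ)) (hΩ : IsCompact Ω)
    (X : Fin k → Submodule ℂ C(Ω, ℂ))
    (D : ℝ) (hD : 1 ≤ D)
    (hud : ∃ ξ : Fin m → Ω, ∀ n : Fin k, ∀ f ∈ X n,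
      unifNormC f ≤ D * ⨆ j : Fin m, ‖f (ξ j)‖)
    (F : Set C(Ω, ℂ)) (hF : IsCompact F) :
    ∃ η : Fin m → Ω,
      ∀ u : C(Ω, ℂ) → Fin k → C(Ω, ℂ),
        (∀ f ∈ F, ∀ n : Fin k, u f n ∈ X n ∧ ∀ v ∈ X n,
          (⨆ j : Fin m, ‖f (η j) - (u f n) (η j)‖) ≤
            ⨆ j : Fin m, ‖f (η j) - v (η j)‖) →
        (⨆ f : F, ⨅ n : Fin k, unifNormC ((f : C(Ω, ℂ)) - u f n)) ≤
          (2 * D + 1) * ⨅ n : Fin k, ⨆ f : F, distToSub (f : C(Ω, ℂ)) (X n) := by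
  have : CompactSpace Ω := isCompact_iff_compactSpace.mp hΩ
  obtain ⟨ξ, hξ⟩ := hud
  refine ⟨ξ, fun u hu => ?_⟩
  have hc : 0 ≤ 2 * D + 1 := by linarith
  have hbdd (n : Fin k) :
      BddAbove (range fun f : F => (2 * D + 1) * distToSub (f : C(Ω, ℂ)) (X n)) := by
    refine (hF.bddAbove_image (Continuous.continuousOn ?_)).mono (range_subset_iff.2 fun f =>
      mem_image_of_mem (fun g => (2 * D + 1) * distToSub g (X n)) f.2)
    simp only [distToSub_eq_infDist]
    fun_prop
  simp only [Real.mul_iInf_of_nonneg hc, Real.mul_iSup_of_nonneg hc, unifNormC_eq_norm]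
  refine Real.iSup_iInf_le_iInf_iSup_of_le (fun _ _ => norm_nonneg _) (fun f n => ?_) hbdd
  obtain ⟨hun, hmin⟩ := hu f f.2 n
  rw [distToSub_eq_infDist]
  exact norm_sub_le_mul_infDist_of_discreteBestApprox (X := (X n).toAddSubgroup)
    (by linarith) (fun g hg => unifNormC_eq_norm g ▸ hξ n g hg) hun hmin

/-- universal sampling recovery bound for function classes
(Theorem udT2). -/
theorem stmt1 {d k m : ℕ} (hk : 0 < k) (hm : 0 < m)
    (Ω : Set (Fin d → ℝ)) (hΩne : Ω.Nonempty) (hΩ : IsCompact Ω)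
    (X : Fin k → Submodule ℂ C(Ω, ℂ))
    (hXfd : ∀ n, FiniteDimensional ℂ (X n))
    (D : ℝ) (hD : 1 ≤ D)
    (hud : ∃ ξ : Fin m → Ω, ∀ n : Fin k, ∀ f ∈ X n,
      unifNormC f ≤ D * ⨆ j : Fin m, ‖f (ξ j)‖)
    (F : Set C(Ω, ℂ)) (hF : IsCompact F) :
    ∃ η : Fin m → Ω,
      ∀ u : C(Ω, ℂ) → Fin k → C(Ω, ℂ),
        (∀ f ∈ F, ∀ n : Fin k, u f n ∈ X n ∧ ∀ v ∈ X n,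
          (⨆ j : Fin m, ‖f (η j) - (u f n) (η j)‖) ≤
            ⨆ j : Fin m, ‖f (η j) - v (η j)‖) →
        (⨆ f : F, ⨅ n : Fin k, unifNormC ((f : C(Ω, ℂ)) - u f n)) ≤
          (2 * D + 1) * ⨅ n : Fin k, ⨆ f : F, distToSub (f : C(Ω, ℂ)) (X n) :=
  stmt1_general Ω hΩ X D hD hud F hF
end
end

section
/- Let γ > 0 be such that for all n > 2 and all N ≤ γ·b_n the Fibonacci cubature formula b_n^{−1} Σ_{ν=1}^{b_n} f(y^ν) equals (2π)^{−2} ∫_{𝕋²} f dx for every f ∈ 𝒯(Γ(N,2)). For a given n, let n' ∈ ℕ be the largest natural number satisfying 2^{n'} ≤ γ·b_n/9. Then for any s = (s_1,s_2) ∈ ℤ_+² with s_1 + s_2 ≤ n' and any f ∈ 𝒯(R(s)): f(x) = (2π)^{−2} ∫_{𝕋²} f(y) 𝒱_{2^s}(x − y) dy = b_n^{−1} Σ_{ν=1}^{b_n} f(y^ν) 𝒱_{2^s}(x − y^ν) for all x ∈ 𝕋². -/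
noncomputable section
open scoped BigOperators
open MeasureTheory

/-- The cube `[0, 2π]^d`, representing the torus `𝕋^d`. -/
def cube (d : ℕ) : Set (Fin d → ℝ) := Set.Icc 0 (fun _ => 2 * Real.pi)

/-- Uniform norm over the torus `𝕋^d = [0, 2π]^d`. -/
def unifNorm {d : ℕ} (f : (Fin d → ℝ) → ℂ) : ℝ :=
  ⨆ x : cube d, ‖f ↑x‖

/-- The exponential `e^{i(k,x)}`. -/
def expFun {d : ℕ} (k : Fin d → ℤ) : (Fin d → ℝ) → ℂ :=
  fun x => Complex.exp (Complex.I * ∑ j, (k j : ℂ) * (x j : ℂ))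

/-- `𝒯(Q)`: the space of trigonometric polynomials with frequencies in `Q`. -/
def trigSpace {d : ℕ} (Q : Finset (Fin d → ℤ)) : Submodule ℂ ((Fin d → ℝ) → ℂ) :=
  Submodule.span ℂ (expFun '' (Q : Set (Fin d → ℤ)))

/-- `R(s) = {k : |k_j| < 2^{s_j}}`. -/
def Rbox {d : ℕ} (s : Fin d → ℕ) : Finset (Fin d → ℤ) :=
  Fintype.piFinset fun j => Finset.Ioo (-(2 ^ (s j) : ℤ)) ((2 : ℤ) ^ (s j))

/-- Best uniform approximation `d(f, 𝒯(Q))_∞`. -/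
def distT {d : ℕ} (f : (Fin d → ℝ) → ℂ) (Q : Finset (Fin d → ℤ)) : ℝ :=
  ⨅ u : trigSpace Q, unifNorm (f - (u : (Fin d → ℝ) → ℂ))

/-- `2π`-periodicity in each variable. -/
def Periodic2Pi {d : ℕ} (f : (Fin d → ℝ) → ℂ) : Prop :=
  ∀ (x : Fin d → ℝ) (j : Fin d), f (x + (2 * Real.pi) • (Pi.single j 1 : Fin d → ℝ)) = f x

/-- The Fibonacci numbers `b_0 = b_1 = 1`, `b_n = b_{n-1} + b_{n-2}`. -/
def fibb : ℕ → ℕ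
  | 0 => 1
  | 1 => 1
  | n + 2 => fibb (n + 1) + fibb n

/-- The hyperbolic cross `Γ(N, d)`. -/
def hyperCross (d N : ℕ) : Finset (Fin d → ℤ) :=
  (Fintype.piFinset fun _ : Fin d => Finset.Icc (-(N : ℤ)) (N : ℤ)).filter
    fun k => (∏ j, max |k j| 1) ≤ (N : ℤ)

/-- The Fibonacci points `y^ν = (2πν/b_n, 2π{ν b_{n-1}/b_n})`. -/
def fibPoint (n ν : ℕ) : Fin 2 → ℝ :=
  ![2 * Real.pi * ν / fibb n, 2 * Real.pi * Int.fract ((↑(ν * fibb (n - 1)) : ℝ) / fibb n)]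

/-- The Dirichlet kernel `𝒟_l`. -/
def dirichletK (l : ℕ) (x : ℝ) : ℂ :=
  ∑ k ∈ Finset.Icc (-(l : ℤ)) (l : ℤ), Complex.exp (Complex.I * (k : ℂ) * (x : ℂ))

/-- The de la Vallée Poussin kernel `𝒱_j`. -/
def vpK (j : ℕ) (x : ℝ) : ℂ := (j : ℂ)⁻¹ * ∑ l ∈ Finset.Ico j (2 * j), dirichletK l x

/-- The multivariate de la Vallée Poussin kernel `𝒱_{(j_1,…,j_d)}`. -/
def vpKd {d : ℕ} (j : Fin d → ℕ) (x : Fin d → ℝ) : ℂ := ∏ i, vpK (j i) (x i)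

/-! `𝒱_j` reproduces `e^{ikt}` for `|k| < j`, so by Fubini `𝒱_{2^s}` reproduces `𝒯(R(s))` under
the integral. For fixed `x`, the frequencies of `y ↦ f(y) 𝒱_{2^s}(x - y)` satisfy
`|k_i| < 2^{s_i} + 2^{s_i + 1} = 3 · 2^{s_i}`, so this function lies in `𝒯(Γ(9 · 2^{n'}, 2))`, and
`9 · 2^{n'} ≤ γ b_n` makes the Fibonacci cubature exact on it. -/

open Complex

variable {d : ℕ}

@[fun_prop]
lemma continuous_dirichletK (l : ℕ) : Continuous (dirichletK l) := by
  unfold dirichletK; fun_prop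

@[fun_prop]
lemma continuous_vpK (j : ℕ) : Continuous (vpK j) := by
  unfold vpK; fun_prop

@[fun_prop]
lemma continuous_vpKd (j : Fin d → ℕ) : Continuous (vpKd j) := by
  unfold vpKd; fun_prop

lemma setIntegral_cube_prod_eq_prod (g : Fin d → ℝ → ℂ) :
    ∫ y in cube d, ∏ i, g i (y i) = ∏ i, ∫ t in Set.Icc 0 (2 * Real.pi), g i t := by
  rw [cube, ← Set.pi_univ_Icc, volume_pi, Measure.restrict_pi_pi]
  exact integral_fintype_prod_eq_prod g

lemma integral_exp_mul_I_Icc (m : ℤ) :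
    ∫ t in Set.Icc 0 (2 * Real.pi), exp (I * m * t)
      = if m = 0 then ((2 * Real.pi : ℝ) : ℂ) else 0 := by
  rw [integral_Icc_eq_integral_Ioc, ← intervalIntegral.integral_of_le Real.two_pi_pos.le]
  split_ifs with hm
  · simp [hm]
  · rw [integral_exp_mul_complex (by simp [hm])]
    have : I * m * ((2 * Real.pi : ℝ) : ℂ) = m * (2 * Real.pi * I) := by push_cast; ring
    rw [this, exp_int_mul_two_pi_mul_I]
    simp

lemma integral_exp_mul_dirichletK {k : ℤ} {l : ℕ} (hk : |k| ≤ l) (x : ℝ) :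
    ∫ t in Set.Icc 0 (2 * Real.pi), exp (I * k * t) * dirichletK l (x - t)
      = (2 * Real.pi : ℝ) * exp (I * k * x) := by
  have hterm (m : ℤ) (t : ℝ) : exp (I * k * t) * exp (I * m * ((x - t : ℝ) : ℂ))
      = exp (I * m * x) * exp (I * ((k - m : ℤ) : ℂ) * t) := by
    rw [← exp_add, ← exp_add]; push_cast; ring_nf
  simp only [dirichletK, Finset.mul_sum, hterm]
  rw [integral_finsetSum _ fun m _ => (Continuous.integrableOn_Icc (by fun_prop))]
  simp only [integral_const_mul, integral_exp_mul_I_Icc, sub_eq_zero, mul_ite, mul_zero]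
  rw [Finset.sum_ite_eq, if_pos (Finset.mem_Icc.mpr (abs_le.mp hk)), mul_comm]

lemma integral_exp_mul_vpK {k : ℤ} {j : ℕ} (hk : |k| < j) (x : ℝ) :
    ∫ t in Set.Icc 0 (2 * Real.pi), exp (I * k * t) * vpK j (x - t)
      = (2 * Real.pi : ℝ) * exp (I * k * x) := by
  have hj : (j : ℂ) ≠ 0 := by
    have : (0 : ℤ) < j := (abs_nonneg k).trans_lt hk
    norm_cast at this ⊢; omega
  simp only [vpK, Finset.mul_sum, mul_left_comm _ (j : ℂ)⁻¹]
  rw [integral_finsetSum _ fun l _ => Continuous.integrableOn_Icc (by fun_prop)]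
  simp only [integral_const_mul]
  rw [Finset.sum_congr rfl fun l hl => congrArg _ (integral_exp_mul_dirichletK
    (hk.le.trans (by exact_mod_cast (Finset.mem_Ico.mp hl).1)) x)]
  rw [Finset.sum_const, Nat.card_Ico, show 2 * j - j = j by omega, nsmul_eq_mul]
  field_simp

lemma expFun_eq_prod (k : Fin d → ℤ) (y : Fin d → ℝ) :
    expFun k y = ∏ i, exp (I * k i * y i) := by
  simp only [expFun, Finset.mul_sum, exp_sum, mul_assoc]

lemma integral_expFun_mul_vpKd {k : Fin d → ℤ} {j : Fin d → ℕ}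
    (hk : ∀ i, |k i| < j i) (x : Fin d → ℝ) :
    ∫ y in cube d, expFun k y * vpKd j (x - y)
      = (((2 * Real.pi) ^ d : ℝ) : ℂ) * expFun k x := by
  simp only [expFun_eq_prod, vpKd, Pi.sub_apply, ← Finset.prod_mul_distrib]
  rw [setIntegral_cube_prod_eq_prod (fun i t => exp (I * k i * t) * vpK (j i) (x i - t))]
  simp only [integral_exp_mul_vpK (hk _), Finset.prod_mul_distrib, Finset.prod_const,
    Finset.card_univ, Fintype.card_fin]
  push_cast; rfl

lemma continuous_of_mem_trigSpace {Q : Finset (Fin d → ℤ)} {f : (Fin d → ℝ) → ℂ}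
    (hf : f ∈ trigSpace Q) : Continuous f := by
  induction hf using Submodule.span_induction with
  | mem g hg => obtain ⟨k, -, rfl⟩ := hg; unfold expFun; fun_prop
  | zero => exact continuous_const
  | add a b _ _ ha hb => exact ha.add hb
  | smul c a _ ha => exact ha.const_smul c

lemma eq_inv_mul_integral_mul_vpKd {Q : Finset (Fin d → ℤ)} {j : Fin d → ℕ}
    (hQ : ∀ k ∈ Q, ∀ i, |k i| < j i) {f : (Fin d → ℝ) → ℂ} (hf : f ∈ trigSpace Q)
    (x : Fin d → ℝ) :
    f x = (((2 * Real.pi) ^ d : ℝ) : ℂ)⁻¹ * ∫ y in cube d, f y * vpKd j (x - y) := by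
  have hc : (((2 * Real.pi) ^ d : ℝ) : ℂ) ≠ 0 := by
    exact_mod_cast (pow_pos Real.two_pi_pos d).ne'
  have hint {g : (Fin d → ℝ) → ℂ} (hg : g ∈ trigSpace Q) :
      Integrable (fun y => g y * vpKd j (x - y)) (volume.restrict (cube d)) :=
    ContinuousOn.integrableOn_compact isCompact_Icc <| by
      have := continuous_of_mem_trigSpace hg
      fun_prop
  induction hf using Submodule.span_induction with
  | mem g hg =>
    obtain ⟨k, hk, rfl⟩ := hg
    rw [integral_expFun_mul_vpKd (hQ k hk) x, inv_mul_cancel_left₀ hc]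
  | zero => simp
  | add a b ha hb iha ihb =>
    simp only [Pi.add_apply, add_mul]
    rw [integral_add (hint ha) (hint hb), mul_add, ← iha, ← ihb]
  | smul c a ha iha =>
    simp only [Pi.smul_apply, smul_eq_mul, mul_assoc]
    rw [integral_const_mul, mul_left_comm, ← iha]

lemma expFun_mem_trigSpace {Q : Finset (Fin d → ℤ)} {k : Fin d → ℤ} (hk : k ∈ Q) :
    expFun k ∈ trigSpace Q :=
  Submodule.subset_span ⟨k, hk, rfl⟩

lemma expFun_add (k m : Fin d → ℤ) : expFun (k + m) = expFun k * expFun m := by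
  ext y
  simp only [expFun, Pi.mul_apply, ← exp_add, ← mul_add, ← Finset.sum_add_distrib, Pi.add_apply,
    Int.cast_add, add_mul]

lemma mul_mem_trigSpace {P Q R : Finset (Fin d → ℤ)}
    (hPQ : ∀ k ∈ P, ∀ m ∈ Q, k + m ∈ R) {f g : (Fin d → ℝ) → ℂ}
    (hf : f ∈ trigSpace P) (hg : g ∈ trigSpace Q) : f * g ∈ trigSpace R := by
  have hfg := Submodule.mul_mem_mul hf hg
  rw [trigSpace, trigSpace, Submodule.span_mul_span] at hfg
  refine Submodule.span_mono ?_ hfg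
  rintro _ ⟨_, ⟨k, hk, rfl⟩, _, ⟨m, hm, rfl⟩, rfl⟩
  exact ⟨k + m, hPQ k hk m hm, expFun_add k m⟩

lemma vpK_sub_eq_sum (j : ℕ) (x t : ℝ) :
    vpK j (x - t) = ∑ p ∈ (Finset.Ico j (2 * j)).sigma fun l => Finset.Icc (-(l : ℤ)) l,
      (j : ℂ)⁻¹ * (exp (I * p.2 * x) * exp (I * (-p.2 : ℤ) * t)) := by
  rw [vpK, Finset.sum_sigma, Finset.mul_sum]
  refine Finset.sum_congr rfl fun l _ => ?_
  rw [dirichletK, Finset.mul_sum]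
  refine Finset.sum_congr rfl fun m _ => ?_
  rw [← exp_add]
  push_cast; ring_nf

lemma vpKd_sub_mem_trigSpace {Q : Finset (Fin d → ℤ)} (j : Fin d → ℕ)
    (hQ : ∀ m : Fin d → ℤ, (∀ i, |m i| < 2 * j i) → m ∈ Q) (x : Fin d → ℝ) :
    (fun y => vpKd j (x - y)) ∈ trigSpace Q := by
  have hexpand : (fun y => vpKd j (x - y)) = ∑ p ∈ Fintype.piFinset fun i =>
      (Finset.Ico (j i) (2 * j i)).sigma fun l => Finset.Icc (-(l : ℤ)) l,
      (∏ i, (j i : ℂ)⁻¹ * exp (I * (p i).2 * x i)) • expFun (fun i => -(p i).2) := by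
    ext y
    simp only [vpKd, Pi.sub_apply, vpK_sub_eq_sum, Finset.prod_univ_sum, Finset.sum_apply,
      Pi.smul_apply, smul_eq_mul, expFun_eq_prod, ← Finset.prod_mul_distrib, mul_assoc]
  rw [hexpand]
  refine Submodule.sum_mem _ fun p hp => Submodule.smul_mem _ _ (expFun_mem_trigSpace (hQ _ ?_))
  intro i
  obtain ⟨hl, hm⟩ := Finset.mem_sigma.mp (Fintype.mem_piFinset.mp hp i)
  rw [Finset.mem_Ico] at hl
  rw [Finset.mem_Icc] at hm
  rw [abs_neg, abs_lt]
  omega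

lemma mem_hyperCross_of_abs_lt {N : ℕ} {k : Fin d → ℤ} (a : Fin d → ℕ)
    (hk : ∀ i, |k i| < a i) (ha : ∏ i, a i ≤ N) : k ∈ hyperCross d N := by
  have hmax (i : Fin d) : max |k i| 1 ≤ a i :=
    max_le (hk i).le (by linarith [abs_nonneg (k i), hk i])
  have hprod : ∏ i, max |k i| 1 ≤ N := by
    calc ∏ i, max |k i| 1 ≤ ∏ i, (a i : ℤ) :=
          Finset.prod_le_prod (fun i _ => by positivity) fun i _ => hmax i
      _ ≤ N := by exact_mod_cast ha
  refine Finset.mem_filter.mpr ⟨Fintype.mem_piFinset.mpr fun i => ?_, hprod⟩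
  have : |k i| ≤ ∏ i, max |k i| 1 := by
    refine (le_max_left _ 1).trans ?_
    simpa using Finset.prod_le_prod_of_subset_of_one_le (f := fun l => max |k l| 1)
      (Finset.subset_univ {i}) (fun _ _ => by positivity) fun l _ _ => le_max_right _ _
  exact Finset.mem_Icc.mpr (abs_le.mp (this.trans hprod))

lemma abs_lt_of_mem_Rbox {s : Fin d → ℕ} {k : Fin d → ℤ} (hk : k ∈ Rbox s) (i : Fin d) :
    |k i| < ((2 ^ s i : ℕ) : ℤ) := by
  push_cast
  exact abs_lt.mpr (Finset.mem_Ioo.mp (Fintype.mem_piFinset.mp hk i))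

lemma mul_vpKd_sub_mem_hyperCross {N : ℕ} {s : Fin d → ℕ} (hN : 3 ^ d * 2 ^ (∑ i, s i) ≤ N)
    {f : (Fin d → ℝ) → ℂ} (hf : f ∈ trigSpace (Rbox s)) (x : Fin d → ℝ) :
    (fun y => f y * vpKd (fun i => 2 ^ s i) (x - y)) ∈ trigSpace (hyperCross d N) := by
  -- the frequencies of `𝒱_{2^s}` lie in `R(s + 1)`
  refine mul_mem_trigSpace (Q := Rbox fun i => s i + 1) (fun k hk m hm => ?_) hf
    (vpKd_sub_mem_trigSpace _ (fun m hm => ?_) x)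
  · refine mem_hyperCross_of_abs_lt (fun i => 3 * 2 ^ s i) (fun i => ?_) ?_
    · have hki := abs_lt_of_mem_Rbox hk i
      have hmi := abs_lt_of_mem_Rbox hm i
      push_cast [pow_succ] at hki hmi ⊢
      rw [Pi.add_apply]
      linarith [abs_add_le (k i) (m i)]
    · rwa [Finset.prod_mul_distrib, Finset.prod_const, Finset.card_univ, Fintype.card_fin,
        Finset.prod_pow_eq_pow_sum]
  · refine Fintype.mem_piFinset.mpr fun i => Finset.mem_Ioo.mpr (abs_lt.mp ?_)
    have hmi := hm i
    push_cast [pow_succ] at hmi ⊢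
    linarith

lemma integral_expFun_eq_zero {k : Fin d → ℤ} (hk : k ≠ 0) :
    ∫ y in cube d, expFun k y = 0 := by
  obtain ⟨i, hi⟩ := Function.ne_iff.mp hk
  simp only [expFun_eq_prod]
  rw [setIntegral_cube_prod_eq_prod (fun i t => exp (I * k i * t))]
  exact Finset.prod_eq_zero (Finset.mem_univ i) ((integral_exp_mul_I_Icc _).trans (if_neg hi))

lemma expFun_fibPoint_three (ν : ℕ) : expFun ![3, 0] (fibPoint 3 ν) = 1 := by
  rw [expFun_eq_prod, Fin.prod_univ_two]
  have : I * ((3 : ℤ) : ℂ) * ((2 * Real.pi * ν / fibb 3 : ℝ) : ℂ) = ν * (2 * Real.pi * I) := by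
    rw [show fibb 3 = 3 from rfl]; push_cast; field_simp
  simp only [fibPoint, Matrix.cons_val_zero, Matrix.cons_val_one, Int.cast_zero,
    mul_zero, zero_mul, exp_zero, mul_one, this, exp_nat_mul_two_pi_mul_I]

lemma lt_one_of_fibonacci_cubature_exact {γ : ℝ}
    (hcub : ∀ N : ℕ, (N : ℝ) ≤ γ * fibb 3 → ∀ f ∈ trigSpace (hyperCross 2 N),
      (fibb 3 : ℂ)⁻¹ * ∑ ν ∈ Finset.Icc 1 (fibb 3), f (fibPoint 3 ν) =
        (((2 * Real.pi) ^ 2 : ℝ) : ℂ)⁻¹ * ∫ x in cube 2, f x) : γ < 1 := by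
  -- `e^{3 i y_1}` has mean zero but equals `1` at the three points `y^ν`, where `y^ν_1 = 2πν/3`
  by_contra! hγ
  have h := hcub 3 (by norm_num [fibb]; linarith) _
    (expFun_mem_trigSpace (k := ![3, 0]) (by decide))
  simp [expFun_fibPoint_three, integral_expFun_eq_zero (show (![3, 0] : Fin 2 → ℤ) ≠ 0 by decide),
    fibb] at h

theorem stmt8_general (γ : ℝ)
    (hcub : ∀ n : ℕ, 2 < n → ∀ N : ℕ, (N : ℝ) ≤ γ * fibb n →
      ∀ f ∈ trigSpace (hyperCross 2 N),
        (fibb n : ℂ)⁻¹ * ∑ ν ∈ Finset.Icc 1 (fibb n), f (fibPoint n ν) =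
          (((2 * Real.pi) ^ 2 : ℝ) : ℂ)⁻¹ * ∫ x in cube 2, f x)
    (n n' : ℕ)
    (hn' : IsGreatest {k : ℕ | (2 : ℝ) ^ k ≤ γ * fibb n / 9} n')
    (s : Fin 2 → ℕ) (hs : (∑ j, s j) ≤ n')
    (f : (Fin 2 → ℝ) → ℂ) (hf : f ∈ trigSpace (Rbox s)) (x : Fin 2 → ℝ) :
    f x = (((2 * Real.pi) ^ 2 : ℝ) : ℂ)⁻¹ *
        (∫ y in cube 2, f y * vpKd (fun i => 2 ^ s i) (x - y)) ∧
    f x = (fibb n : ℂ)⁻¹ * ∑ ν ∈ Finset.Icc 1 (fibb n),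
        f (fibPoint n ν) * vpKd (fun i => 2 ^ s i) (x - fibPoint n ν) := by
  have hrep := eq_inv_mul_integral_mul_vpKd (fun k hk => abs_lt_of_mem_Rbox hk) hf x
  refine ⟨hrep, hrep.trans ?_⟩
  have hN : ((9 * 2 ^ n' : ℕ) : ℝ) ≤ γ * fibb n := by
    have : (2 : ℝ) ^ n' ≤ γ * fibb n / 9 := hn'.1
    push_cast
    linarith
  -- `9 ≤ γ b_n` with `γ < 1` leaves no room for `b_n ≤ 2`
  have hn : 2 < n := by
    have hγ := lt_one_of_fibonacci_cubature_exact (hcub 3 (by norm_num))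
    by_contra! hn
    have hfib : (fibb n : ℝ) ≤ 2 := by interval_cases n <;> norm_num [fibb]
    have h2 : (1 : ℝ) ≤ 2 ^ n' := one_le_pow₀ (by norm_num)
    push_cast at hN
    nlinarith [mul_le_mul_of_nonneg_right hγ.le (Nat.cast_nonneg (α := ℝ) (fibb n))]
  have hsN : 3 ^ 2 * 2 ^ (∑ i, s i) ≤ 9 * 2 ^ n' :=
    Nat.mul_le_mul_left _ (Nat.pow_le_pow_right two_pos hs)
  exact (hcub n hn _ hN _ (mul_vpKd_sub_mem_hyperCross hsN hf x)).symm

/-- reproducing property (I) of the Fibonacci point set via the de la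
Vallée Poussin kernels (Theorem FT1 (I)). -/
theorem stmt8 (γ : ℝ) (hγ : 0 < γ)
    (hcub : ∀ n : ℕ, 2 < n → ∀ N : ℕ, (N : ℝ) ≤ γ * fibb n →
      ∀ f ∈ trigSpace (hyperCross 2 N),
        (fibb n : ℂ)⁻¹ * ∑ ν ∈ Finset.Icc 1 (fibb n), f (fibPoint n ν) =
          (((2 * Real.pi) ^ 2 : ℝ) : ℂ)⁻¹ * ∫ x in cube 2, f x)
    (n n' : ℕ)
    (hn' : IsGreatest {k : ℕ | (2 : ℝ) ^ k ≤ γ * fibb n / 9} n')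
    (s : Fin 2 → ℕ) (hs : (∑ j, s j) ≤ n')
    (f : (Fin 2 → ℝ) → ℂ) (hf : f ∈ trigSpace (Rbox s)) (x : Fin 2 → ℝ) :
    f x = (((2 * Real.pi) ^ 2 : ℝ) : ℂ)⁻¹ *
        (∫ y in cube 2, f y * vpKd (fun i => 2 ^ s i) (x - y)) ∧
    f x = (fibb n : ℂ)⁻¹ * ∑ ν ∈ Finset.Icc 1 (fibb n),
        f (fibPoint n ν) * vpKd (fun i => 2 ^ s i) (x - fibPoint n ν) :=
  stmt8_general γ hcub n n' hn' s hs f hf x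
end
end

section
/- Let γ > 0 be such that for all n > 2 and all N ≤ γ·b_n the Fibonacci cubature formula b_n^{−1} Σ_{ν=1}^{b_n} f(y^ν) equals (2π)^{−2} ∫_{𝕋²} f dx for every f ∈ 𝒯(Γ(N,2)). For a given n, let n' ∈ ℕ be the largest natural number satisfying 2^{n'} ≤ γ·b_n/9. Then for any s = (s_1,s_2) ∈ ℤ_+² with s_1 + s_2 ≤ n' and any complex numbers a_1,…,a_{b_n}: ‖b_n^{−1} Σ_{ν=1}^{b_n} a_ν |𝒱_{2^s}(· − y^ν)|‖_∞ ≤ 9·max_{1≤ν≤b_n} |a_ν|. -/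
/-!
By Fejér's identity `∑_{l<m} 𝒟_l = |E_m|²`, where `E_m(t) = ∑_{k<m} e^{ikt}` (`expSum`), the
de la Vallée Poussin kernel is `𝒱_j = j⁻¹ (|E_{2j}|² - |E_j|²)`, so `|𝒱_j|` is dominated by
`K_j := j⁻¹ (|E_{2j}|² + |E_j|²)` (`vpMajorant`), a trigonometric polynomial of degree `≤ 2j` whose
normalized mean over the circle is `3`. Hence for fixed `x` the function
`y ↦ K_{2^{s_1}}(x_1 - y_1) K_{2^{s_2}}(x_2 - y_2)` lies in `𝒯(Γ(N,2))` with
`N = 4 · 2^{s_1 + s_2} ≤ γ b_n` and has mean `9`; by exactness of the cubature formula its average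
over the Fibonacci points is `9` as well, which bounds the sum by `9 max |a_ν|`.

The case `n ≤ 2` cannot occur: at `n = 3` the three Fibonacci points do not integrate `e^{3ix_1}`
exactly, so `γ < 1`, while `9 ≤ γ b_n` then forces `b_n > 9`.
-/

noncomputable section
open scoped BigOperators
open MeasureTheory

open Complex ComplexConjugate Finset

def expSum (m : ℕ) (t : ℝ) : ℂ := ∑ k ∈ range m, exp (I * k * t)

theorem dirichletK_eq (m : ℕ) (t : ℝ) :
    dirichletK m t = exp (-(I * m * t)) * expSum m t + expSum (m + 1) t := by
  rw [dirichletK, Int.Icc_eq_finset_map, sum_map,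
    show ((m : ℤ) + 1 - -(m : ℤ)).toNat = m + (m + 1) by omega, sum_range_add, expSum, expSum,
    mul_sum]
  congr 1 <;> refine sum_congr rfl fun k _ => ?_
  · rw [← exp_add]; congr 1; simp; ring
  · congr 1; simp

theorem exp_mul_conj_expSum_succ (m : ℕ) (t : ℝ) :
    exp (I * m * t) * conj (expSum (m + 1) t) = expSum (m + 1) t := by
  rw [expSum, map_sum, mul_sum, ← sum_range_reflect _ (m + 1)]
  refine sum_congr rfl fun q hq => ?_
  rw [← exp_conj, ← exp_add, add_tsub_cancel_right,
    Nat.cast_sub (by simpa [Nat.lt_succ_iff] using hq)]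
  congr 1; simp; ring

theorem sum_range_dirichletK (m : ℕ) (t : ℝ) :
    ∑ l ∈ range m, dirichletK l t = normSq (expSum m t) := by
  induction m with
  | zero => simp [expSum]
  | succ m ih =>
    have hsucc : expSum (m + 1) t = expSum m t + exp (I * m * t) := sum_range_succ _ m
    have hconj : conj (exp (I * m * t)) = exp (-(I * m * t)) := by rw [← exp_conj]; simp
    -- `|E_m + e_m|² - |E_m|² = e_{-m} E_m + e_m conj E_{m+1}`, and the last term is `E_{m+1}`.
    have hrefl := exp_mul_conj_expSum_succ m t
    rw [hsucc, map_add, hconj] at hrefl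
    rw [sum_range_succ, ih, dirichletK_eq, ← mul_conj, ← mul_conj, hsucc, map_add, hconj]
    linear_combination -hrefl

theorem vpK_eq (j : ℕ) (t : ℝ) :
    vpK j t = (j : ℂ)⁻¹ * (normSq (expSum (2 * j) t) - normSq (expSum j t)) := by
  rw [vpK, ← sum_range_dirichletK, ← sum_range_dirichletK, sum_Ico_eq_sub _ (by omega)]

def vpMajorant (j : ℕ) (t : ℝ) : ℝ :=
  (j : ℝ)⁻¹ * (normSq (expSum (2 * j) t) + normSq (expSum j t))

theorem norm_vpK_le (j : ℕ) (t : ℝ) : ‖vpK j t‖ ≤ vpMajorant j t := by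
  rw [vpK_eq, vpMajorant, norm_mul, norm_inv, norm_natCast, ← ofReal_sub, norm_real,
    Real.norm_eq_abs]
  gcongr
  exact (abs_sub _ _).trans_eq
    (by rw [abs_of_nonneg (normSq_nonneg _), abs_of_nonneg (normSq_nonneg _)])

theorem norm_vpKd_le {d : ℕ} (j : Fin d → ℕ) (z : Fin d → ℝ) :
    ‖vpKd j z‖ ≤ ∏ i, vpMajorant (j i) (z i) := by
  rw [vpKd, norm_prod]
  exact prod_le_prod (fun i _ => norm_nonneg _) fun i _ => norm_vpK_le _ _

def trigPolyDegLE (m : ℕ) : Submodule ℂ (ℝ → ℂ) :=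
  Submodule.span ℂ ((fun (k : ℤ) (t : ℝ) => exp (I * k * t)) '' ↑(Icc (-(m : ℤ)) m))

theorem exp_mem_trigPolyDegLE {m : ℕ} {k : ℤ} (hk : |k| ≤ m) :
    (fun t : ℝ => exp (I * k * t)) ∈ trigPolyDegLE m :=
  Submodule.subset_span ⟨k, by simpa [abs_le] using hk, rfl⟩

theorem trigPolyDegLE_mono {m m' : ℕ} (h : m ≤ m') : trigPolyDegLE m ≤ trigPolyDegLE m' :=
  Submodule.span_mono <| Set.image_mono fun k hk => by
    simp only [coe_Icc, Set.mem_Icc] at hk ⊢; omega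

theorem comp_sub_mem_trigPolyDegLE {m : ℕ} {g : ℝ → ℂ} (hg : g ∈ trigPolyDegLE m)
    (x : ℝ) : (fun t => g (x - t)) ∈ trigPolyDegLE m := by
  suffices trigPolyDegLE m ≤ (trigPolyDegLE m).comap (LinearMap.funLeft ℂ ℂ (x - ·)) from
    this hg
  refine Submodule.span_le.2 ?_
  rintro _ ⟨k, hk, rfl⟩
  have hsplit : (fun t : ℝ => exp (I * k * ↑(x - t))) =
      exp (I * k * x) • fun t : ℝ => exp (I * ↑(-k) * t) := by
    ext t; simp only [Pi.smul_apply, smul_eq_mul, ← exp_add]; push_cast; ring_nf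
  change (fun t : ℝ => exp (I * k * ↑(x - t))) ∈ trigPolyDegLE m
  rw [hsplit]
  refine Submodule.smul_mem _ _ (exp_mem_trigPolyDegLE ?_)
  simp only [coe_Icc, Set.mem_Icc] at hk
  rw [abs_neg, abs_le]; exact hk

theorem normSq_expSum_eq_sum (m : ℕ) (t : ℝ) :
    (normSq (expSum m t) : ℂ) =
      ∑ p ∈ range m, ∑ q ∈ range m, exp (I * ((p - q : ℤ) : ℂ) * t) := by
  rw [← mul_conj, expSum, map_sum, sum_mul_sum]
  refine sum_congr rfl fun p _ => sum_congr rfl fun q _ => ?_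
  rw [← exp_conj, ← exp_add]; congr 1; simp; ring

theorem normSq_expSum_mem (m : ℕ) :
    (fun t => (normSq (expSum m t) : ℂ)) ∈ trigPolyDegLE m := by
  have hsum : (fun t => (normSq (expSum m t) : ℂ)) =
      ∑ p ∈ range m, ∑ q ∈ range m, fun t : ℝ => exp (I * ((p - q : ℤ) : ℂ) * t) := by
    ext t; simp only [normSq_expSum_eq_sum, Finset.sum_apply]
  rw [hsum]
  refine Submodule.sum_mem _ fun p hp => Submodule.sum_mem _ fun q hq => exp_mem_trigPolyDegLE ?_
  simp only [mem_range] at hp hq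
  rw [abs_le]; omega

theorem vpMajorant_mem (j : ℕ) : (fun t => (vpMajorant j t : ℂ)) ∈ trigPolyDegLE (2 * j) := by
  have hsum : (fun t => (vpMajorant j t : ℂ)) =
      (j : ℂ)⁻¹ • ((fun t => (normSq (expSum (2 * j) t) : ℂ)) +
        fun t => (normSq (expSum j t) : ℂ)) := by
    ext t; simp [vpMajorant]
  rw [hsum]
  exact Submodule.smul_mem _ _ (add_mem (normSq_expSum_mem _)
    (trigPolyDegLE_mono (by omega) (normSq_expSum_mem _)))

theorem expFun_apply_eq_prod {d : ℕ} (k : Fin d → ℤ) (y : Fin d → ℝ) :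
    expFun k y = ∏ i, exp (I * k i * y i) := by
  rw [expFun, mul_sum, exp_sum]; simp only [mul_assoc]

theorem prod_mem_trigSpace {d : ℕ} {m : Fin d → ℕ} {g : Fin d → ℝ → ℂ}
    (hg : ∀ i, g i ∈ trigPolyDegLE (m i)) :
    (fun y => ∏ i, g i (y i)) ∈
      trigSpace (Fintype.piFinset fun i => Icc (-(m i : ℤ)) (m i)) := by
  choose c hc using fun i => (Fintype.mem_span_image_iff_exists_fun ℂ).1 (hg i)
  have hsum : (fun y => ∏ i, g i (y i)) =
      ∑ κ : ∀ i, ↥(↑(Icc (-(m i : ℤ)) (m i)) : Set ℤ),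
        (∏ i, c i (κ i)) • expFun fun i => (κ i : ℤ) := by
    ext y
    simp only [← hc, Finset.sum_apply, Pi.smul_apply, smul_eq_mul, Fintype.prod_sum,
      expFun_apply_eq_prod, ← prod_mul_distrib]
  rw [hsum]
  exact Submodule.sum_mem _ fun κ _ => Submodule.smul_mem _ _
    (Submodule.subset_span ⟨_, Fintype.mem_piFinset.2 fun i => (κ i).2, rfl⟩)

theorem trigSpace_mono {d : ℕ} {Q Q' : Finset (Fin d → ℤ)} (h : Q ⊆ Q') :
    trigSpace Q ≤ trigSpace Q' :=
  Submodule.span_mono (Set.image_mono (coe_subset.2 h))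

theorem piFinset_Icc_subset_hyperCross {d N : ℕ} {m : Fin d → ℕ} (hm : ∀ i, 1 ≤ m i)
    (hN : ∏ i, m i ≤ N) :
    Fintype.piFinset (fun i => Icc (-(m i : ℤ)) (m i)) ⊆ hyperCross d N := by
  intro k hk
  have hk' : ∀ i, |k i| ≤ m i := fun i => abs_le.2 (mem_Icc.1 (Fintype.mem_piFinset.1 hk i))
  have hmN : ∀ i, m i ≤ N := fun i =>
    (Nat.le_of_dvd (prod_pos fun i _ => hm i) (dvd_prod_of_mem _ (mem_univ i))).trans hN
  refine mem_filter.2 ⟨Fintype.mem_piFinset.2 fun i => mem_Icc.2 (abs_le.1 ?_), ?_⟩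
  · exact (hk' i).trans (by exact_mod_cast hmN i)
  · calc ∏ i, max |k i| 1 ≤ ∏ i, (m i : ℤ) :=
          prod_le_prod (fun i _ => by positivity) fun i _ => max_le (hk' i) (by exact_mod_cast hm i)
      _ ≤ N := by exact_mod_cast hN

theorem integral_exp_int_mul (k : ℤ) :
    ∫ t in Set.Icc 0 (2 * Real.pi), exp (I * k * t) =
      if k = 0 then ((2 * Real.pi : ℝ) : ℂ) else 0 := by
  rw [integral_Icc_eq_integral_Ioc, ← intervalIntegral.integral_of_le (by positivity)]
  split_ifs with hk
  · simp [hk]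
  have hIk : I * k ≠ 0 := by simpa [Complex.ext_iff] using hk
  rw [integral_exp_mul_complex hIk,
    show I * k * ((2 * Real.pi : ℝ) : ℂ) = k * (2 * Real.pi * I) by push_cast; ring,
    exp_int_mul_two_pi_mul_I]
  simp

theorem integral_exp_int_mul_sub (k : ℤ) (x : ℝ) :
    ∫ t in Set.Icc 0 (2 * Real.pi), exp (I * k * ↑(x - t)) =
      if k = 0 then ((2 * Real.pi : ℝ) : ℂ) else 0 := by
  have hsplit (t : ℝ) : exp (I * k * ↑(x - t)) = exp (I * k * x) * exp (I * ↑(-k) * t) := by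
    rw [← exp_add]; push_cast; ring_nf
  simp only [hsplit, integral_const_mul, integral_exp_int_mul, neg_eq_zero]
  split_ifs with hk <;> simp [hk]

theorem integral_normSq_expSum_sub (m : ℕ) (x : ℝ) :
    ∫ t in Set.Icc 0 (2 * Real.pi), (normSq (expSum m (x - t)) : ℂ) =
      m * (2 * Real.pi : ℝ) := by
  have hint : ∀ k : ℤ,
      IntegrableOn (fun t : ℝ => exp (I * k * ↑(x - t))) (Set.Icc 0 (2 * Real.pi)) :=
    fun k => Continuous.integrableOn_Icc (by fun_prop)
  simp only [normSq_expSum_eq_sum]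
  rw [integral_finsetSum _ fun p _ => integrable_finsetSum _ fun q _ => hint _]
  simp only [integral_finsetSum _ fun q _ => hint _, integral_exp_int_mul_sub, sub_eq_zero,
    Nat.cast_inj, sum_ite_eq]
  rw [sum_ite_of_true fun p hp => hp]
  simp

theorem integral_vpMajorant_sub {j : ℕ} (hj : 0 < j) (x : ℝ) :
    ∫ t in Set.Icc 0 (2 * Real.pi), (vpMajorant j (x - t) : ℂ) = 3 * (2 * Real.pi : ℝ) := by
  have hint : ∀ m, IntegrableOn (fun t : ℝ => (normSq (expSum m (x - t)) : ℂ))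
      (Set.Icc 0 (2 * Real.pi)) :=
    fun m => Continuous.integrableOn_Icc (by simp only [normSq_expSum_eq_sum]; fun_prop)
  simp only [vpMajorant, ofReal_mul, ofReal_add, ofReal_inv, ofReal_natCast]
  rw [integral_const_mul, integral_add (hint _) (hint _), integral_normSq_expSum_sub,
    integral_normSq_expSum_sub]
  have : (j : ℂ) ≠ 0 := by exact_mod_cast hj.ne'
  field_simp
  push_cast; ring

theorem setIntegral_cube_prod {d : ℕ} (g : Fin d → ℝ → ℂ) :
    ∫ y in cube d, ∏ i, g i (y i) = ∏ i, ∫ t in Set.Icc 0 (2 * Real.pi), g i t := by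
  rw [cube, ← Set.pi_univ_Icc, volume_pi, Measure.restrict_pi_pi]
  exact integral_fintype_prod_eq_prod _

theorem setIntegral_cube_expFun {d : ℕ} (k : Fin d → ℤ) :
    ∫ y in cube d, expFun k y = ∏ i, if k i = 0 then ((2 * Real.pi : ℝ) : ℂ) else 0 := by
  simp only [expFun_apply_eq_prod, setIntegral_cube_prod fun i t => exp (I * k i * t),
    integral_exp_int_mul]

theorem setIntegral_cube_prod_vpMajorant_sub {d : ℕ} {j : Fin d → ℕ} (hj : ∀ i, 0 < j i)
    (x : Fin d → ℝ) :
    ∫ y in cube d, ∏ i, (vpMajorant (j i) (x i - y i) : ℂ) =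
      (3 * (2 * Real.pi : ℝ)) ^ d := by
  rw [setIntegral_cube_prod fun i t => (vpMajorant (j i) (x i - t) : ℂ)]
  simp [integral_vpMajorant_sub (hj _)]

theorem sum_prod_vpMajorant_eq_of_exact {d : ℕ} {ι : Type*} {S : Finset ι}
    {p : ι → Fin d → ℝ} {b : ℕ} (hb : b ≠ 0) {Q : Finset (Fin d → ℤ)}
    (hexact : ∀ f ∈ trigSpace Q, (b : ℂ)⁻¹ * ∑ ν ∈ S, f (p ν) =
      (((2 * Real.pi) ^ d : ℝ) : ℂ)⁻¹ * ∫ x in cube d, f x)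
    {j : Fin d → ℕ} (hj : ∀ i, 0 < j i)
    (hQ : Fintype.piFinset (fun i => Icc (-((2 * j i : ℕ) : ℤ)) (2 * j i : ℕ)) ⊆ Q)
    (x : Fin d → ℝ) :
    ∑ ν ∈ S, ∏ i, vpMajorant (j i) (x i - p ν i) = 3 ^ d * b := by
  have hmem := trigSpace_mono hQ
    (prod_mem_trigSpace fun i => comp_sub_mem_trigPolyDegLE (vpMajorant_mem (j i)) (x i))
  have hmean := hexact _ hmem
  rw [setIntegral_cube_prod_vpMajorant_sub hj] at hmean
  have hb' : (b : ℂ) ≠ 0 := by exact_mod_cast hb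
  rw [ofReal_pow, mul_pow, inv_mul_eq_iff_eq_mul₀ hb'] at hmean
  have hsum : ((∑ ν ∈ S, ∏ i, vpMajorant (j i) (x i - p ν i) : ℝ) : ℂ) =
      ((3 ^ d * b : ℝ) : ℂ) := by
    push_cast; rw [hmean]; field_simp
  exact_mod_cast hsum

theorem fibb_pos (n : ℕ) : 0 < fibb n := by
  induction n using Nat.strong_induction_on with
  | _ n ih =>
    match n with
    | 0 | 1 => simp [fibb]
    | m + 2 => rw [fibb]; exact Nat.add_pos_left (ih (m + 1) (by omega)) _

theorem not_exact_fibonacci_cubature_three :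
    ¬ ∀ f ∈ trigSpace (hyperCross 2 3),
      (fibb 3 : ℂ)⁻¹ * ∑ ν ∈ Icc 1 (fibb 3), f (fibPoint 3 ν) =
        (((2 * Real.pi) ^ 2 : ℝ) : ℂ)⁻¹ * ∫ x in cube 2, f x := by
  intro hexact
  have hmem : expFun ![3, 0] ∈ trigSpace (hyperCross 2 3) :=
    Submodule.subset_span ⟨_, by decide, rfl⟩
  have hnode : ∀ ν, expFun ![3, 0] (fibPoint 3 ν) = 1 := by
    intro ν
    rw [expFun_apply_eq_prod, Fin.prod_univ_two]
    have hb3 : fibb 3 = 3 := rfl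
    simp only [fibPoint, hb3, Fin.isValue, Matrix.cons_val_zero, Matrix.cons_val_one,
      Matrix.cons_val_fin_one, Int.cast_ofNat, Int.cast_zero, zero_mul, mul_zero, exp_zero, mul_one]
    push_cast
    rw [show I * 3 * (2 * Real.pi * ν / 3) = ν * (2 * Real.pi * I) by ring,
      exp_nat_mul_two_pi_mul_I]
  have h := hexact _ hmem
  simp [hnode, setIntegral_cube_expFun, fibb] at h

theorem two_lt_of_nine_le_mul_fibb {γ : ℝ}
    (hexact : ∀ N : ℕ, (N : ℝ) ≤ γ * fibb 3 → ∀ f ∈ trigSpace (hyperCross 2 N),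
      (fibb 3 : ℂ)⁻¹ * ∑ ν ∈ Icc 1 (fibb 3), f (fibPoint 3 ν) =
        (((2 * Real.pi) ^ 2 : ℝ) : ℂ)⁻¹ * ∫ x in cube 2, f x)
    {n : ℕ} (hn : 9 ≤ γ * fibb n) : 2 < n := by
  have hγ : γ < 1 := by
    by_contra! hγ
    exact not_exact_fibonacci_cubature_three (hexact 3 (by simp [fibb]; linarith))
  by_contra! hn2
  have : (fibb n : ℝ) ≤ 2 := by interval_cases n <;> norm_num [fibb]
  nlinarith

theorem unifNorm_le {d : ℕ} {f : (Fin d → ℝ) → ℂ} {C : ℝ}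
    (h : ∀ x ∈ cube d, ‖f x‖ ≤ C) : unifNorm f ≤ C :=
  have : Nonempty (cube d) := ⟨⟨0, le_rfl, fun _ => by positivity⟩⟩
  ciSup_le fun x => h x x.2

theorem norm_sum_mul_ofReal_le {ι : Type*} [Fintype ι] (a : ι → ℂ) {u w : ι → ℝ}
    (hu : ∀ ν, 0 ≤ u ν) (huw : ∀ ν, u ν ≤ w ν) :
    ‖∑ ν, a ν * (u ν : ℂ)‖ ≤ (⨆ ν, ‖a ν‖) * ∑ ν, w ν := by
  have ha : ∀ ν, ‖a ν‖ ≤ ⨆ ν, ‖a ν‖ := le_ciSup (Set.finite_range _).bddAbove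
  rw [mul_sum]
  refine (norm_sum_le _ _).trans (sum_le_sum fun ν _ => ?_)
  rw [norm_mul, norm_real, Real.norm_of_nonneg (hu ν)]
  exact mul_le_mul (ha ν) (huw ν) (hu ν) ((norm_nonneg _).trans (ha ν))

theorem sum_fin_succ_eq_sum_Icc {M : Type*} [AddCommMonoid M] (f : ℕ → M) (b : ℕ) :
    ∑ ν : Fin b, f (ν + 1) = ∑ ν ∈ Icc 1 b, f ν := by
  rw [Fin.sum_univ_eq_sum_range (fun ν => f (ν + 1)), range_eq_Ico, sum_Ico_add',
    Ico_add_one_right_eq_Icc, zero_add]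

theorem stmt9_general (γ : ℝ)
    (hcub : ∀ n : ℕ, 2 < n → ∀ N : ℕ, (N : ℝ) ≤ γ * fibb n →
      ∀ f ∈ trigSpace (hyperCross 2 N),
        (fibb n : ℂ)⁻¹ * ∑ ν ∈ Finset.Icc 1 (fibb n), f (fibPoint n ν) =
          (((2 * Real.pi) ^ 2 : ℝ) : ℂ)⁻¹ * ∫ x in cube 2, f x)
    (n n' : ℕ)
    (hn' : IsGreatest {k : ℕ | (2 : ℝ) ^ k ≤ γ * fibb n / 9} n')
    (s : Fin 2 → ℕ) (hs : (∑ j, s j) ≤ n')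
    (a : Fin (fibb n) → ℂ) :
    unifNorm (fun x => (fibb n : ℂ)⁻¹ * ∑ ν : Fin (fibb n),
        a ν * (‖vpKd (fun i => 2 ^ s i) (x - fibPoint n ((ν : ℕ) + 1))‖ : ℂ)) ≤
      9 * ⨆ ν : Fin (fibb n), ‖a ν‖ := by
  have hb : (0 : ℝ) < fibb n := by exact_mod_cast fibb_pos n
  have h2n' : 2 ^ n' * 9 ≤ γ * fibb n := (le_div_iff₀ (by norm_num)).1 hn'.1
  have hn : 2 < n := two_lt_of_nine_le_mul_fibb (hcub 3 (by norm_num))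
    (by nlinarith [one_le_pow₀ (M₀ := ℝ) (n := n') one_le_two])
  set j : Fin 2 → ℕ := fun i => 2 ^ s i
  have hN : ((∏ i, 2 * j i : ℕ) : ℝ) ≤ γ * fibb n := by
    have : (2 : ℝ) ^ (s 0 + s 1) ≤ 2 ^ n' := pow_le_pow_right₀ one_le_two (by simpa using hs)
    simp only [j, Fin.prod_univ_two]; push_cast
    linarith [pow_add (2 : ℝ) (s 0) (s 1), pow_pos (two_pos (α := ℝ)) n']
  have hmean := sum_prod_vpMajorant_eq_of_exact (fibb_pos n).ne' (hcub n hn _ hN)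
    (fun i => by positivity)
    (piFinset_Icc_subset_hyperCross (fun _ => Nat.mul_pos two_pos (Nat.two_pow_pos _)) le_rfl)
  refine unifNorm_le fun x _ => ?_
  rw [norm_mul, norm_inv, Complex.norm_natCast]
  calc (fibb n : ℝ)⁻¹ * ‖∑ ν : Fin (fibb n),
        a ν * (‖vpKd j (x - fibPoint n (ν + 1))‖ : ℂ)‖
      ≤ (fibb n : ℝ)⁻¹ * ((⨆ ν, ‖a ν‖) *
          ∑ ν : Fin (fibb n), ∏ i, vpMajorant (j i) (x i - fibPoint n (ν + 1) i)) := by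
        gcongr
        exact norm_sum_mul_ofReal_le a (fun _ => norm_nonneg _) fun _ => norm_vpKd_le _ _
    _ = 9 * ⨆ ν, ‖a ν‖ := by
        rw [sum_fin_succ_eq_sum_Icc fun ν => ∏ i, vpMajorant (j i) (x i - fibPoint n ν i),
          hmean]
        field_simp; norm_num

/-- property (II) of the Fibonacci point set, a uniform bound for sums of
absolute values of shifted de la Vallée Poussin kernels (Theorem FT1 (II)). -/
theorem stmt9 (γ : ℝ) (hγ : 0 < γ)
    (hcub : ∀ n : ℕ, 2 < n → ∀ N : ℕ, (N : ℝ) ≤ γ * fibb n →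
      ∀ f ∈ trigSpace (hyperCross 2 N),
        (fibb n : ℂ)⁻¹ * ∑ ν ∈ Finset.Icc 1 (fibb n), f (fibPoint n ν) =
          (((2 * Real.pi) ^ 2 : ℝ) : ℂ)⁻¹ * ∫ x in cube 2, f x)
    (n n' : ℕ)
    (hn' : IsGreatest {k : ℕ | (2 : ℝ) ^ k ≤ γ * fibb n / 9} n')
    (s : Fin 2 → ℕ) (hs : (∑ j, s j) ≤ n')
    (a : Fin (fibb n) → ℂ) :
    unifNorm (fun x => (fibb n : ℂ)⁻¹ * ∑ ν : Fin (fibb n),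
        a ν * (‖vpKd (fun i => 2 ^ s i) (x - fibPoint n ((ν : ℕ) + 1))‖ : ℂ)) ≤
      9 * ⨆ ν : Fin (fibb n), ‖a ν‖ :=
  stmt9_general γ hcub n n' hn' s hs a
end
end
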